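/- Let κ : ℝ → ℝ be smooth and let D₀ = i·v_D·σ₃·∂_X + ϑ·κ(X)·σ₁ with v_D, ϑ > 0. Then the ℂ²-valued function α⋆(X) = (1, i)ᵀ · exp(−(ϑ/v_D)·∫₀ˣ κ(s) ds) satisfies D₀ α⋆ = 0, i.e., i·v_D·σ₃·α⋆'(X) + ϑ·κ(X)·σ₁·α⋆(X) = 0 for all X. -/

import Mathlib

open Matrix Complex intervalIntegral

/-- The zero mode α⋆(X) = (1, i)ᵀ · exp(−(ϑ/v_D)·∫₀ˣ κ) of the effective Dirac
operator D₀ = i·v_D·σ₃·∂_X + ϑ·κ(X)·σ₁ satisfies D₀ α⋆ = 0 pointwise. -/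
theorem zero_mode_of_dirac
    (κ : ℝ → ℝ) (hκ : ContDiff ℝ (⊤ : ℕ∞) κ) (vD ϑ : ℝ) (hv : 0 < vD) (hϑ : 0 < ϑ)
    (αst : ℝ → Fin 2 → ℂ)
    (hαst : ∀ X, αst X =
      (Complex.exp (-((ϑ : ℂ)/vD) * (∫ s in (0:ℝ)..X, (κ s : ℂ)))) • ![1, Complex.I]) :
    ∀ X : ℝ,
      (Complex.I * (vD : ℂ)) •
          (!![(1:ℂ), 0; 0, -1]).mulVec (fun j => deriv (fun Y => αst Y j) X)
        + ((ϑ : ℂ) * (κ X : ℂ)) • (!![(0:ℂ), 1; 1, 0]).mulVec (αst X) = 0 := by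
  intro X
  have hκc : Continuous fun s : ℝ => (κ s : ℂ) :=
    Complex.continuous_ofReal.comp hκ.continuous
  set g : ℝ → ℂ := fun Y => ∫ s in (0:ℝ)..Y, (κ s : ℂ) with hg
  have hgd : HasDerivAt g ((κ X : ℂ)) X :=
    intervalIntegral.integral_hasDerivAt_right (hκc.intervalIntegrable 0 X)
      (hκc.stronglyMeasurable.stronglyMeasurableAtFilter) hκc.continuousAt
  have hE : HasDerivAt (fun Y => Complex.exp (-((ϑ : ℂ)/vD) * g Y))
      (-((ϑ : ℂ)/vD) * (κ X : ℂ) * Complex.exp (-((ϑ : ℂ)/vD) * g X)) X := by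
    have := ((hgd.const_mul (-((ϑ : ℂ)/vD))).cexp)
    simpa [mul_comm] using this
  set E := Complex.exp (-((ϑ : ℂ)/vD) * g X) with hEdef
  have hderiv : ∀ j : Fin 2,
      deriv (fun Y => αst Y j) X = -((ϑ : ℂ)/vD) * (κ X : ℂ) * E * ![1, Complex.I] j := by
    intro j
    have : (fun Y => αst Y j) = fun Y =>
        Complex.exp (-((ϑ : ℂ)/vD) * g Y) * ![1, Complex.I] j := by
      funext Y; rw [hαst Y]; simp [hg]
    rw [this]
    simpa [mul_assoc] using (hE.mul_const (![1, Complex.I] j)).deriv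
  have hv' : (vD : ℂ) ≠ 0 := by exact_mod_cast hv.ne'
  funext j
  fin_cases j <;>
    simp [hderiv, hαst X, mulVec, dotProduct, Fin.sum_univ_two, hEdef, hg] <;>
    field_simp <;> ring_nf <;> simp [Complex.I_sq]
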